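/- arXiv:hep-th/9212094 — 6 statements merged into one kernel-verified Lean document; each statement's English description precedes it below -/
import Mathlib

section
/- For an integer n > 1 and each 1 ≤ i ≤ n-1, the numbers δ_i satisfy δ_i = ∏_{j=1}^{n-1} (1 - δ_j)^{2·min(i,j)}. -/
/-!
Write `s k = sin (k π / (2n + 1))`, so that `δ_j = (s 1 / s (j + 1))²`. The identity
`sin (x + y) sin (x - y) = sin² x - sin² y` gives `1 - δ_j = h j / h (j + 1)` with
`h k = s k / s (k + 1)`, and `h n = 1` because `s n = s (n + 1)`. Hence
`∏_{j = k}^{n-1} (1 - δ_j) = h k`. Since `min i j` counts the `k ∈ [1, i]` with `k ≤ j`,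
the right-hand side is `∏_{k=1}^{i} h k ²`, which telescopes to `(s 1 / s (i + 1))² = δ_i`.
-/

open Real

/-- `δ_j = sin²(π/(2n+1))/sin²(π(j+1)/(2n+1))`. -/
noncomputable def del (n j : ℕ) : ℝ :=
  Real.sin (π / (2 * n + 1)) ^ 2 / Real.sin (π * (j + 1) / (2 * n + 1)) ^ 2

open Finset

namespace Finset

theorem prod_Ico_div'_of_ne_zero {G₀ : Type*} [CommGroupWithZero G₀] (f : ℕ → G₀) {m n : ℕ}
    (hmn : m ≤ n) (hf : ∀ i ∈ Icc m n, f i ≠ 0) :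
    ∏ i ∈ Ico m n, f i / f (i + 1) = f m / f n := by
  induction n, hmn using Nat.le_induction with
  | base => rw [Ico_self, prod_empty, div_self (hf m (by simp))]
  | succ n hmn ih =>
    rw [prod_Ico_succ_top hmn, ih fun i hi => hf i (Icc_subset_Icc_right n.le_succ hi),
      div_mul_div_cancel₀ (hf n (by simp [hmn]))]

theorem prod_Icc_pow_min {M : Type*} [CommMonoid M] (x : ℕ → M) (i N : ℕ) :
    ∏ j ∈ Icc 1 N, x j ^ min i j = ∏ k ∈ Icc 1 i, ∏ j ∈ Icc k N, x j := by
  rw [prod_comm' (t' := Icc 1 N) (s' := fun j => Icc 1 (min i j)) (by simp only [mem_Icc]; omega)]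
  simp

end Finset

theorem Real.sin_add_mul_sin_sub (x y : ℝ) :
    sin (x + y) * sin (x - y) = sin x ^ 2 - sin y ^ 2 := by
  rw [sin_add, sin_sub]
  linear_combination sin x ^ 2 * sin_sq_add_cos_sq y - sin y ^ 2 * sin_sq_add_cos_sq x

noncomputable def sinFrac (n k : ℕ) : ℝ := sin (k * π / (2 * n + 1))

namespace sinFrac

variable {n k : ℕ}

theorem pos (hk₁ : 1 ≤ k) (hk₂ : k ≤ 2 * n) : 0 < sinFrac n k := by
  have hk₁' : (1 : ℝ) ≤ k := by exact_mod_cast hk₁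
  have hk₂' : (k : ℝ) < 2 * n + 1 := by exact_mod_cast Nat.lt_succ_of_le hk₂
  apply sin_pos_of_pos_of_lt_pi
  · positivity
  · rw [div_lt_iff₀ (by positivity)]
    nlinarith [pi_pos]

theorem ne_zero (hk₁ : 1 ≤ k) (hk₂ : k ≤ 2 * n) : sinFrac n k ≠ 0 :=
  (pos hk₁ hk₂).ne'

theorem succ_self (n : ℕ) : sinFrac n (n + 1) = sinFrac n n := by
  have h : ((n + 1 : ℕ) : ℝ) * π / (2 * n + 1) = π - n * π / (2 * n + 1) := by
    field_simp
    push_cast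
    ring
  rw [sinFrac, sinFrac, h, sin_pi_sub]

theorem add_two_mul_self (n k : ℕ) :
    sinFrac n k * sinFrac n (k + 2) = sinFrac n (k + 1) ^ 2 - sinFrac n 1 ^ 2 := by
  have h := sin_add_mul_sin_sub ((k + 1 : ℕ) * π / (2 * n + 1)) ((1 : ℕ) * π / (2 * n + 1))
  rw [mul_comm] at h
  unfold sinFrac
  convert h using 3 <;> push_cast <;> ring

end sinFrac

theorem del_eq_sinFrac (n j : ℕ) : del n j = (sinFrac n 1 / sinFrac n (j + 1)) ^ 2 := by
  rw [del, sinFrac, sinFrac, div_pow]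
  push_cast
  ring_nf

theorem one_sub_del_eq {n j : ℕ} (hj : j + 2 ≤ 2 * n) :
    1 - del n j = sinFrac n j / sinFrac n (j + 1) / (sinFrac n (j + 1) / sinFrac n (j + 2)) := by
  have h₁ := sinFrac.ne_zero (n := n) (k := j + 1) (by omega) (by omega)
  have h₂ := sinFrac.ne_zero (n := n) (k := j + 2) (by omega) hj
  rw [del_eq_sinFrac]
  field_simp
  linear_combination -sinFrac.add_two_mul_self n j

theorem prod_Icc_one_sub_del {n k : ℕ} (hk₁ : 1 ≤ k) (hk₂ : k ≤ n) :
    ∏ j ∈ Icc k (n - 1), (1 - del n j) = sinFrac n k / sinFrac n (k + 1) := by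
  set h : ℕ → ℝ := fun k => sinFrac n k / sinFrac n (k + 1)
  have hh : ∀ i ∈ Icc k n, h i ≠ 0 := fun i hi => by
    simp only [mem_Icc] at hi
    exact div_ne_zero (sinFrac.ne_zero (by omega) (by omega)) (sinFrac.ne_zero (by omega) (by omega))
  have h_top : h n = 1 := by
    simp only [h, sinFrac.succ_self]
    exact div_self (sinFrac.ne_zero (by omega) (by omega))
  rw [← Ico_add_one_right_eq_Icc, Nat.sub_add_cancel (by omega : 1 ≤ n)]
  calc ∏ j ∈ Ico k n, (1 - del n j)
      = ∏ j ∈ Ico k n, h j / h (j + 1) :=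
        prod_congr rfl fun j hj => one_sub_del_eq (by simp only [mem_Ico] at hj; omega)
    _ = h k := by rw [prod_Ico_div'_of_ne_zero h hk₂ hh, h_top, div_one]

theorem del_prod_identity_general (n : ℕ) (hn : 1 < n) (i : ℕ) (hi2 : i ≤ n - 1) :
    del n i = ∏ j ∈ Finset.Icc 1 (n - 1), (1 - del n j) ^ (2 * min i j) := by
  have hs : ∀ k ∈ Icc 1 (i + 1), sinFrac n k ≠ 0 := fun k hk => by
    simp only [mem_Icc] at hk
    exact sinFrac.ne_zero hk.1 (by omega)
  calc del n i
      = (∏ k ∈ Icc 1 i, sinFrac n k / sinFrac n (k + 1)) ^ 2 := by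
        rw [del_eq_sinFrac, ← Ico_add_one_right_eq_Icc,
          prod_Ico_div'_of_ne_zero _ (by omega) hs]
    _ = ∏ k ∈ Icc 1 i, ∏ j ∈ Icc k (n - 1), (1 - del n j) ^ 2 := by
        rw [← prod_pow]
        refine prod_congr rfl fun k hk => ?_
        obtain ⟨hk₁, hk₂⟩ := mem_Icc.1 hk
        rw [prod_pow, prod_Icc_one_sub_del hk₁ (by omega)]
    _ = ∏ j ∈ Icc 1 (n - 1), (1 - del n j) ^ (2 * min i j) := by
        simp only [← prod_Icc_pow_min, pow_mul]

theorem del_prod_identity (n : ℕ) (hn : 1 < n) (i : ℕ) (hi1 : 1 ≤ i) (hi2 : i ≤ n - 1) :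
    del n i = ∏ j ∈ Finset.Icc 1 (n - 1), (1 - del n j) ^ (2 * min i j) :=
  del_prod_identity_general n hn i hi2
end

section
/- Define rational functions A_k(t) recursively by A_1(t) = 1 and A_k(t) = 1 - t/A_{k-1}(t). Then for each i ≥ 1, the function f_i(t) := 1 - A_{i+1}(t)/A_i(t) satisfies the identity f_i(t) = t^i / ∏_{k=1}^{i-1} (1 - f_k(t))^{2(i-k)}, as an identity of rational functions (equivalently, for all real t where all quantities are defined and denominators nonzero). -/
/-- The continued-fraction recursion `A_1(t) = 1`, `A_k(t) = 1 - t/A_{k-1}(t)`. -/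
noncomputable def contA : ℕ → ℝ → ℝ
  | 0, _ => 1
  | 1, _ => 1
  | (k + 2), t => 1 - t / contA (k + 1) t

/-- `f_i(t) = 1 - A_{i+1}(t)/A_i(t)`. -/
noncomputable def fF (i : ℕ) (t : ℝ) : ℝ := 1 - contA (i + 1) t / contA i t

/-!
Since `1 - f_k = A_{k+1}/A_k`, the product `∏_{k=1}^{m-1} (1 - f_k)` telescopes to `A_m`, and
regrouping the factor `(1 - f_k)^{2(i-k)}` as one square for each `m = k+1, …, i` turns the
denominator into `∏_{m=2}^{i} A_m²`. On the other hand the recursion gives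
`f_{j+1} A_{j+1}² = t f_j`, so `f_i ∏_{m=2}^{i} A_m² = t^{i-1} f_1 = t^i`.
-/

open Finset

theorem Finset.prod_Ico_pow_sub {M : Type*} [CommMonoid M] (g : ℕ → M) (a n : ℕ) :
    ∏ k ∈ Ico a n, g k ^ (n - k) = ∏ m ∈ Ico a n, ∏ k ∈ Icc a m, g k := by
  rw [prod_comm' (t' := Ico a n) (s' := fun k => Ico k n)]
  · refine prod_congr rfl fun k _ => ?_
    rw [prod_const, Nat.card_Ico]
  · intro m k
    simp only [mem_Ico, mem_Icc]
    omega

theorem Finset.prod_Icc_div_of_ne_zero {K : Type*} [Field K] (a : ℕ → K) {m n : ℕ}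
    (hmn : m ≤ n) (ha : ∀ k ∈ Icc m n, a k ≠ 0) :
    ∏ k ∈ Icc m n, a (k + 1) / a k = a (n + 1) / a m := by
  induction n, hmn using Nat.le_induction with
  | base => simp
  | succ n hmn ih =>
    rw [prod_Icc_succ_top (by omega), ih fun k hk => ha k (Icc_subset_Icc_right n.le_succ hk)]
    exact div_mul_div_cancel₀' (ha (n + 1) (by simp; omega)) _ _

lemma contA_add_two (k : ℕ) (t : ℝ) : contA (k + 2) t = 1 - t / contA (k + 1) t := rfl

lemma one_sub_fF (k : ℕ) (t : ℝ) : 1 - fF k t = contA (k + 1) t / contA k t := by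
  simp [fF]

lemma fF_one (t : ℝ) : fF 1 t = t := by
  simp [fF, contA]

lemma fF_add_two_mul_sq {j : ℕ} {t : ℝ} (h₁ : contA (j + 1) t ≠ 0) (h₂ : contA (j + 2) t ≠ 0) :
    fF (j + 2) t * contA (j + 2) t ^ 2 = t * fF (j + 1) t := by
  have h₃ : contA (j + 1) t - t ≠ 0 := fun h => h₂ <| by
    rw [contA_add_two, one_sub_div h₁, h, zero_div]
  simp only [fF, contA_add_two] at *
  field_simp
  ring

lemma fF_mul_prod_sq {n : ℕ} {t : ℝ} (hA : ∀ k ∈ Icc 1 (n + 1), contA k t ≠ 0) :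
    fF (n + 1) t * ∏ m ∈ Ico 1 (n + 1), contA (m + 1) t ^ 2 = t ^ (n + 1) := by
  induction n with
  | zero => simp [fF_one]
  | succ n ih =>
    have hA' : ∀ k ∈ Icc 1 (n + 1), contA k t ≠ 0 := fun k hk =>
      hA k (Icc_subset_Icc_right (n + 1).le_succ hk)
    rw [prod_Ico_succ_top (by omega), ← mul_assoc, mul_right_comm,
      fF_add_two_mul_sq (hA' _ (by simp)) (hA _ (by simp)), mul_assoc, ih hA', ← pow_succ']

lemma prod_Icc_one_sub_fF {m : ℕ} {t : ℝ} (hA : ∀ k ∈ Icc 1 m, contA k t ≠ 0) :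
    ∏ k ∈ Icc 1 m, (1 - fF k t) = contA (m + 1) t := by
  rcases Nat.eq_zero_or_pos m with rfl | hm
  · simp [contA]
  · simp only [one_sub_fF]
    rw [prod_Icc_div_of_ne_zero _ hm hA, contA, div_one]

theorem f_key_identity (i : ℕ) (hi : 1 ≤ i) (t : ℝ)
    (hA : ∀ k, 1 ≤ k → k ≤ i + 1 → contA k t ≠ 0) :
    fF i t = t ^ i / ∏ k ∈ Finset.Icc 1 (i - 1), (1 - fF k t) ^ (2 * (i - k)) := by
  obtain ⟨n, rfl⟩ := Nat.exists_eq_add_of_le' hi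
  have hA' : ∀ k ∈ Icc 1 (n + 1), contA k t ≠ 0 := fun k hk => hA k (by grind) (by grind)
  have hden : ∏ k ∈ Icc 1 (n + 1 - 1), (1 - fF k t) ^ (2 * (n + 1 - k)) =
      ∏ m ∈ Ico 1 (n + 1), contA (m + 1) t ^ 2 := by
    calc _ = ∏ k ∈ Ico 1 (n + 1), ((1 - fF k t) ^ 2) ^ (n + 1 - k) := by
          simp only [Nat.add_sub_cancel, Ico_add_one_right_eq_Icc, pow_mul]
      _ = ∏ m ∈ Ico 1 (n + 1), (∏ k ∈ Icc 1 m, (1 - fF k t)) ^ 2 := by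
          simp only [prod_Ico_pow_sub, prod_pow]
      _ = _ := prod_congr rfl fun m hm => by
          rw [prod_Icc_one_sub_fF fun k hk => hA' k (Icc_subset_Icc_right (by grind) hk)]
  have hden_ne : ∏ m ∈ Ico 1 (n + 1), contA (m + 1) t ^ 2 ≠ 0 :=
    prod_ne_zero_iff.mpr fun m hm => pow_ne_zero 2 (hA' (m + 1) (by grind))
  rw [hden, eq_div_iff hden_ne, fF_mul_prod_sq hA']
end

section
/- Define A_k(t) by A_1(t)=1, A_k(t)=1-t/A_{k-1}(t), and f_i(t)=1-A_{i+1}(t)/A_i(t). Fix an integer n>1 and let δ_j = sin²(π/(2n+1))/sin²(π(j+1)/(2n+1)). Then f_i(δ_1) = δ_i for all 1 ≤ i ≤ n-1. -/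
open Real

/-! At `t = 1/(4c²)` the continued fraction telescopes: if `s 0 = 0` and
`s (k+2) = 2c s (k+1) - s k`, then `A_k(t) = s (k+1) / (2c s k)`, and the Cassini-type invariant
`s (k+1)² - s k s (k+2) = s 1²` turns `f_i(t)` into `s 1² / s (i+1)²`. For `s k = sin (kθ)`,
`c = cos θ`, `θ = π/(2n+1)` this gives `δ_1 = 1/(4cos²θ)` and `f_i(δ_1) = δ_i`; the sines do not
vanish because `kθ ∈ (0, π)` for `1 ≤ k ≤ 2n`. -/

section ChebyshevRecurrence

variable {c : ℝ} {s : ℕ → ℝ}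

theorem sq_sub_mul_eq_sq_one (hrec : ∀ k, s (k + 2) = 2 * c * s (k + 1) - s k) (h0 : s 0 = 0)
    (k : ℕ) : s (k + 1) ^ 2 - s k * s (k + 2) = s 1 ^ 2 := by
  induction k with
  | zero => simp [h0]
  | succ k ih =>
    rw [← ih, hrec (k + 1), hrec k]
    ring

theorem contA_eq_div (hc : c ≠ 0) (hrec : ∀ k, s (k + 2) = 2 * c * s (k + 1) - s k)
    (h0 : s 0 = 0) {k : ℕ} (hk : 1 ≤ k) (hs : ∀ j, 1 ≤ j → j ≤ k → s j ≠ 0) :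
    contA k (1 / (4 * c ^ 2)) = s (k + 1) / (2 * c * s k) := by
  induction k, hk using Nat.le_induction with
  | base =>
    have hs1 := hs 1 le_rfl le_rfl
    rw [hrec 0, h0, contA]
    field_simp
    ring
  | succ k hk ih =>
    obtain ⟨p, rfl⟩ : ∃ p, k = p + 1 := ⟨k - 1, by omega⟩
    have hsk := hs (p + 2) (by omega) le_rfl
    rw [contA, ih fun j hj1 hj2 => hs j hj1 (by omega), hrec (p + 1)]
    field_simp
    ring

theorem fF_eq_sq_div_sq (hc : c ≠ 0) (hrec : ∀ k, s (k + 2) = 2 * c * s (k + 1) - s k)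
    (h0 : s 0 = 0) {i : ℕ} (hi : 1 ≤ i) (hs : ∀ j, 1 ≤ j → j ≤ i + 1 → s j ≠ 0) :
    fF i (1 / (4 * c ^ 2)) = s 1 ^ 2 / s (i + 1) ^ 2 := by
  have hsi := hs i hi (by omega)
  have hsi1 := hs (i + 1) (by omega) le_rfl
  rw [fF, contA_eq_div hc hrec h0 hi fun j hj1 hj2 => hs j hj1 (by omega),
    contA_eq_div hc hrec h0 (by omega) hs, ← sq_sub_mul_eq_sq_one hrec h0 i]
  field_simp

end ChebyshevRecurrence

theorem sin_nat_add_two_mul (θ : ℝ) (k : ℕ) :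
    sin (↑(k + 2) * θ) = 2 * cos θ * sin (↑(k + 1) * θ) - sin (↑k * θ) := by
  have hadd := sin_add ((k + 1) * θ) θ
  have hsub := sin_sub ((k + 1) * θ) θ
  push_cast
  rw [show ((k : ℝ) + 2) * θ = (k + 1) * θ + θ by ring,
    show (k : ℝ) * θ = (k + 1) * θ - θ by ring, hadd, hsub]
  ring

theorem sin_mul_pi_div_pos {x N : ℝ} (hx : 0 < x) (hxN : x < N) : 0 < sin (x * (π / N)) := by
  have hN : 0 < N := hx.trans hxN
  apply sin_pos_of_pos_of_lt_pi (by positivity)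
  rw [mul_div_assoc', div_lt_iff₀ hN]
  nlinarith [pi_pos]

theorem sin_sq_div_sin_two_mul_sq {θ : ℝ} (h : sin θ ≠ 0) :
    sin θ ^ 2 / sin (2 * θ) ^ 2 = 1 / (4 * cos θ ^ 2) := by
  rw [sin_two_mul]
  field_simp
  ring

theorem f_at_delta_one_general (n : ℕ) (i : ℕ) (hi1 : 1 ≤ i) (hi2 : i ≤ n - 1) :
    fF i (del n 1) = del n i := by
  set θ := π / (2 * n + 1) with hθ
  have hsin : ∀ j : ℕ, 1 ≤ j → j ≤ 2 * n → sin (↑j * θ) ≠ 0 := fun j hj1 hj2 =>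
    (sin_mul_pi_div_pos (by exact_mod_cast hj1) (by exact_mod_cast Nat.lt_succ_of_le hj2)).ne'
  have hcos : cos θ ≠ 0 := fun h => hsin 2 one_le_two (by omega) (by
    rw [Nat.cast_two, sin_two_mul, h, mul_zero])
  -- `↑(1 : ℕ)` matches the shape `s 1` produced by `fF_eq_sq_div_sq` below
  have hdel : ∀ j : ℕ, del n j = sin (↑(1 : ℕ) * θ) ^ 2 / sin (↑(j + 1) * θ) ^ 2 := fun j => by
    rw [del, hθ]
    push_cast
    ring_nf
  have hdel1 : del n 1 = 1 / (4 * cos θ ^ 2) := by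
    rw [hdel, ← sin_sq_div_sin_two_mul_sq (by simpa using hsin 1 le_rfl (by omega))]
    norm_num
  rw [hdel1, hdel, fF_eq_sq_div_sq (s := fun k : ℕ => sin (k * θ)) hcos (sin_nat_add_two_mul θ)
    (by simp) hi1 fun j hj1 hj2 => hsin j hj1 (by omega)]

theorem f_at_delta_one (n : ℕ) (hn : 1 < n) (i : ℕ) (hi1 : 1 ≤ i) (hi2 : i ≤ n - 1) :
    fF i (del n 1) = del n i :=
  f_at_delta_one_general n i hi1 hi2
end

section
/- Let M_n(x) be the n×n matrix with entries (M_n)_{ij} = x^{n-j} if i + j ≥ n+1 and 0 otherwise (rows and columns indexed 1..n). Then for x ≠ 0, M_n(x)^{-2} = x^{-n}·L_n(x), where L_n(x) is the tridiagonal matrix with diagonal (1+x,...,1+x,x), superdiagonal -1, subdiagonal -x. -/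
/-!
Reading the columns of `M_n(x)` in reverse order gives the upper triangular all-ones matrix
with its columns scaled by powers of `x`. The inverse of the all-ones triangle is `1` minus the
shift, so `M_n(x)⁻¹` lives on two antidiagonals: with 0-based indices, its column `j` is
`x^{-j}` on `i + j = n - 1` and `-x^{-(j+1)}` on `i + j = n - 2`. Squaring a matrix of this
shape is a two-term computation per entry, and gives `x^{-n} L_n(x)`.
-/

/-- The matrix `M_n(x)`: with 1-based indices, `(M_n)_{ij} = x^{n-j}` if `i+j ≥ n+1` and `0`
otherwise.  Here rows and columns are `0,…,n-1`, so the entry at `(i,j)` is `x^{n-1-j}`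
when `i + j + 1 ≥ n`. -/
noncomputable def Mmat (n : ℕ) (x : ℝ) : Matrix (Fin n) (Fin n) ℝ :=
  fun i j => if n ≤ (i : ℕ) + (j : ℕ) + 1 then x ^ (n - 1 - (j : ℕ)) else 0

/-- The tridiagonal matrix `L_n(x)` with diagonal `(1+x,…,1+x,x)`, superdiagonal `-1`
and subdiagonal `-x`. -/
noncomputable def Lmat (n : ℕ) (x : ℝ) : Matrix (Fin n) (Fin n) ℝ :=
  fun i j =>
    if (i : ℕ) = j then (if (i : ℕ) = n - 1 then x else 1 + x)
    else if (j : ℕ) = (i : ℕ) + 1 then -1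
    else if (i : ℕ) = (j : ℕ) + 1 then -x
    else 0

noncomputable def MmatInv (n : ℕ) (x : ℝ) : Matrix (Fin n) (Fin n) ℝ :=
  fun i j =>
    if (i : ℕ) + j + 1 = n then x⁻¹ ^ (j : ℕ)
    else if (i : ℕ) + j + 2 = n then -x⁻¹ ^ ((j : ℕ) + 1)
    else 0

section

variable {n : ℕ} {x : ℝ}

lemma mul_MmatInv_apply (A : Matrix (Fin n) (Fin n) ℝ) (i k : Fin n) :
    (A * MmatInv n x) i k = A i k.rev * x⁻¹ ^ (k : ℕ) -
      if h : (k : ℕ) + 1 < n then A i (Fin.rev ⟨k + 1, h⟩) * x⁻¹ ^ ((k : ℕ) + 1) else 0 := by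
  have hk := k.isLt
  have off_support : ∀ j : Fin n, (j : ℕ) + k + 1 ≠ n → (j : ℕ) + k + 2 ≠ n →
      A i j * MmatInv n x j k = 0 := by
    intro j h₁ h₂
    rw [MmatInv, if_neg h₁, if_neg h₂, mul_zero]
  rw [Matrix.mul_apply]
  split_ifs with h
  · rw [Fintype.sum_eq_add k.rev (Fin.rev ⟨k + 1, h⟩)
      (Fin.rev_injective.ne (Fin.ne_of_val_ne (Nat.lt_succ_self _).ne))]
    · simp only [MmatInv, Fin.val_rev]
      rw [if_pos (by omega), if_neg (by omega), if_pos (by omega)]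
      ring
    · rintro j ⟨hj₁, hj₂⟩
      simp only [ne_eq, Fin.ext_iff, Fin.val_rev] at hj₁ hj₂
      exact off_support j (by omega) (by omega)
  · rw [Fintype.sum_eq_single k.rev, sub_zero]
    · simp only [MmatInv, Fin.val_rev]
      rw [if_pos (by omega)]
    · intro j hj
      rw [ne_eq, Fin.ext_iff, Fin.val_rev] at hj
      exact off_support j (by omega) (by omega)

lemma Mmat_apply_rev (i k : Fin n) : Mmat n x i k.rev = if k ≤ i then x ^ (k : ℕ) else 0 := by
  simp only [Mmat, Fin.val_rev, Fin.le_def]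
  congr 1
  · exact propext (by omega)
  · congr 1
    omega

lemma Mmat_mul_MmatInv (hx : x ≠ 0) : Mmat n x * MmatInv n x = 1 := by
  ext i k
  simp only [mul_MmatInv_apply, Mmat_apply_rev, Matrix.one_apply, Fin.le_def, Fin.ext_iff]
  split_ifs <;> first | omega | simp [hx]

lemma MmatInv_mul_self (hx : x ≠ 0) : MmatInv n x * MmatInv n x = (x ^ n)⁻¹ • Lmat n x := by
  ext i k
  simp only [mul_MmatInv_apply, MmatInv, Lmat, Fin.val_rev, Matrix.smul_apply, smul_eq_mul]
  obtain ⟨m, hm⟩ := Nat.exists_eq_add_of_lt k.isLt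
  -- `m = 0` is the last column, where the diagonal entry of `L_n(x)` is `x` rather than `1 + x`.
  rcases m with _ | m
  all_goals
    simp only [hm, Nat.add_sub_add_right, Nat.add_sub_cancel_left, Nat.add_sub_add_left,
      Nat.add_sub_cancel, add_zero, Nat.sub_self, inv_pow]
    split_ifs <;> first | omega | (field_simp; ring)

end

theorem M_inv_sq_eq_L (n : ℕ) (x : ℝ) (hx : x ≠ 0) :
    (Mmat n x ^ 2)⁻¹ = (x ^ n)⁻¹ • Lmat n x := by
  rw [sq, Matrix.mul_inv_rev, Matrix.inv_eq_right_inv (Mmat_mul_MmatInv hx), MmatInv_mul_self hx]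
end

section
/- Let n > 1 and 0 < x ≤ 1. The n×n matrix M_n(x) with entries (M_n)_{ij} = x^{n-j} if i+j ≥ n+1 and 0 otherwise has n distinct real eigenvalues, and its eigenvalue of maximal absolute value is positive. -/
open Matrix Polynomial

/-- The inverse matrix of `Mmat`. -/
noncomputable def Nmat (n : ℕ) (x : ℝ) : Matrix (Fin n) (Fin n) ℝ :=
  fun i j => if (i : ℕ) + (j : ℕ) + 1 = n then (x ^ (n - 1 - (i : ℕ)))⁻¹
    else if (i : ℕ) + (j : ℕ) + 2 = n then -(x ^ (n - 1 - (i : ℕ)))⁻¹ else 0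

lemma Nmat_mul_Mmat (n : ℕ) (hn : 0 < n) (x : ℝ) (hx0 : 0 < x) :
    Nmat n x * Mmat n x = 1 := by
  have hxne : x ≠ 0 := ne_of_gt hx0
  ext i j
  rw [Matrix.mul_apply]
  set c : ℝ := (x ^ (n - 1 - (i : ℕ)))⁻¹ with hc
  have hcx : c * x ^ (n - 1 - (i : ℕ)) = 1 := inv_mul_cancel₀ (pow_ne_zero _ hxne)
  have hi := i.isLt
  have hj := j.isLt
  by_cases hP : (i : ℕ) + 2 ≤ n
  · set σ : Fin n := ⟨n - 1 - (i : ℕ), by omega⟩ with hσ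
    set τ : Fin n := ⟨n - 2 - (i : ℕ), by omega⟩ with hτ
    have hterm : ∀ k : Fin n, Nmat n x i k * Mmat n x k j =
        (if k = σ then c * Mmat n x k j else 0) +
        (if k = τ then -c * Mmat n x k j else 0) := by
      intro k
      have hk := k.isLt
      have e1 : ((i : ℕ) + (k : ℕ) + 1 = n) ↔ k = σ := by
        rw [Fin.ext_iff]; simp only [hσ]; omega
      have e2 : ((i : ℕ) + (k : ℕ) + 2 = n) ↔ k = τ := by
        rw [Fin.ext_iff]; simp only [hτ]; omega
      have e3 : σ ≠ τ := by
        rw [Ne, Fin.ext_iff]; simp only [hσ, hτ]; omega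
      rw [Nmat]
      by_cases h1 : k = σ
      · rw [if_pos (e1.mpr h1), if_pos h1, if_neg (by rw [h1]; exact e3), add_zero]
      · rw [if_neg (fun h => h1 (e1.mp h)), if_neg h1, zero_add]
        by_cases h2 : k = τ
        · rw [if_pos (e2.mpr h2), if_pos h2]
        · rw [if_neg (fun h => h2 (e2.mp h)), if_neg h2, zero_mul]
    rw [Finset.sum_congr rfl fun k _ => hterm k, Finset.sum_add_distrib,
      Finset.sum_ite_eq' Finset.univ σ, Finset.sum_ite_eq' Finset.univ τ]
    simp only [Finset.mem_univ, if_true]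
    have hM1 : Mmat n x σ j = if (i : ℕ) ≤ (j : ℕ) then x ^ (n - 1 - (j : ℕ)) else 0 := by
      rw [Mmat]
      congr 1
      rw [eq_iff_iff]
      simp only [hσ]; omega
    have hM2 : Mmat n x τ j = if (i : ℕ) + 1 ≤ (j : ℕ) then x ^ (n - 1 - (j : ℕ)) else 0 := by
      rw [Mmat]
      congr 1
      rw [eq_iff_iff]
      simp only [hτ]; omega
    rw [hM1, hM2]
    rcases lt_trichotomy ((i : ℕ)) ((j : ℕ)) with h | h | h
    · rw [if_pos (by omega : (i:ℕ) ≤ j), if_pos (by omega : (i:ℕ)+1 ≤ j),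
        Matrix.one_apply_ne (Fin.ne_of_val_ne (by omega))]
      ring
    · rw [if_pos (by omega : (i:ℕ) ≤ j), if_neg (by omega : ¬ ((i:ℕ)+1 ≤ j)),
        show i = j from Fin.ext h, Matrix.one_apply_eq,
        show n - 1 - (j:ℕ) = n - 1 - (i:ℕ) from by omega, mul_zero, add_zero]
      exact hcx
    · rw [if_neg (by omega : ¬ ((i:ℕ) ≤ j)), if_neg (by omega : ¬ ((i:ℕ)+1 ≤ j)),
        Matrix.one_apply_ne (Fin.ne_of_val_ne (by omega))]
      ring
  · -- i = n-1
    have hi1 : (i : ℕ) = n - 1 := by omega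
    set σ : Fin n := ⟨0, hn⟩ with hσ
    have hterm : ∀ k : Fin n, Nmat n x i k * Mmat n x k j =
        (if k = σ then c * Mmat n x k j else 0) := by
      intro k
      have hk := k.isLt
      have e1 : ((i : ℕ) + (k : ℕ) + 1 = n) ↔ k = σ := by
        rw [Fin.ext_iff]; simp only [hσ]; omega
      rw [Nmat]
      by_cases h1 : k = σ
      · rw [if_pos (e1.mpr h1), if_pos h1]
      · rw [if_neg (fun h => h1 (e1.mp h)), if_neg (by omega), if_neg h1, zero_mul]
    rw [Finset.sum_congr rfl fun k _ => hterm k, Finset.sum_ite_eq' Finset.univ σ]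
    simp only [Finset.mem_univ, if_true]
    have hM1 : Mmat n x σ j = if (j : ℕ) = n - 1 then x ^ (n - 1 - (j : ℕ)) else 0 := by
      rw [Mmat]
      congr 1
      rw [eq_iff_iff]
      simp only [hσ]; omega
    rw [hM1]
    by_cases h : (j : ℕ) = n - 1
    · rw [if_pos h, show i = j from Fin.ext (by omega), Matrix.one_apply_eq,
        show n - 1 - (j:ℕ) = n - 1 - (i:ℕ) from by omega]
      exact hcx
    · rw [if_neg h, Matrix.one_apply_ne (Fin.ne_of_val_ne (by omega)), mul_zero]

lemma Nmat_support {n : ℕ} {x : ℝ} {i j : Fin n}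
    (h : ¬ ((i : ℕ) + (j : ℕ) + 1 = n ∨ (i : ℕ) + (j : ℕ) + 2 = n)) :
    Nmat n x i j = 0 := by
  rw [Nmat, if_neg (fun hh => h (Or.inl hh)), if_neg (fun hh => h (Or.inr hh))]

lemma NN_upper (n : ℕ) (x : ℝ) (i j : Fin n) (h : (i : ℕ) + 1 < (j : ℕ)) :
    (Nmat n x * Nmat n x) i j = 0 := by
  rw [Matrix.mul_apply]
  apply Finset.sum_eq_zero
  intro k _
  by_cases h1 : (i : ℕ) + (k : ℕ) + 1 = n ∨ (i : ℕ) + (k : ℕ) + 2 = n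
  · rw [Nmat_support (x := x) (i := k) (j := j) (by omega), mul_zero]
  · rw [Nmat_support h1, zero_mul]

lemma NN_super (n : ℕ) (x : ℝ) (hx0 : 0 < x) (i j : Fin n) (h : (i : ℕ) + 1 = (j : ℕ)) :
    (Nmat n x * Nmat n x) i j ≠ 0 := by
  have hi := i.isLt
  have hj := j.isLt
  set τ : Fin n := ⟨n - 2 - (i : ℕ), by omega⟩ with hτ
  have hsum : (Nmat n x * Nmat n x) i j = Nmat n x i τ * Nmat n x τ j := by
    rw [Matrix.mul_apply]
    apply Finset.sum_eq_single
    · intro k _ hk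
      have hk' : (k : ℕ) ≠ n - 2 - (i : ℕ) := fun hh => hk (Fin.ext hh)
      have hkl := k.isLt
      by_cases h1 : (i : ℕ) + (k : ℕ) + 1 = n ∨ (i : ℕ) + (k : ℕ) + 2 = n
      · rw [Nmat_support (x := x) (i := k) (j := j) (by omega), mul_zero]
      · rw [Nmat_support h1, zero_mul]
    · intro hh
      exact absurd (Finset.mem_univ τ) hh
  rw [hsum, Nmat, Nmat]
  rw [if_neg (by simp only [hτ]; omega), if_pos (by simp only [hτ]; omega),
    if_pos (by simp only [hτ]; omega)]
  have h1 : (0:ℝ) < (x ^ (n - 1 - (i : ℕ)))⁻¹ := by positivity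
  have h2 : (0:ℝ) < (x ^ (n - 1 - (τ : ℕ)))⁻¹ := by positivity
  nlinarith

/-- kernel lemma for "lower Hessenberg with nonzero superdiagonal" matrices -/
lemma tri_ker {n : ℕ} (hn : 0 < n) (T : Matrix (Fin n) (Fin n) ℝ)
    (hup : ∀ i j : Fin n, (i : ℕ) + 1 < (j : ℕ) → T i j = 0)
    (hsup : ∀ i j : Fin n, (i : ℕ) + 1 = (j : ℕ) → T i j ≠ 0)
    (lam : ℝ) (u : Fin n → ℝ) (hu : T *ᵥ u = lam • u)
    (h0 : u ⟨0, hn⟩ = 0) : u = 0 := by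
  have key : ∀ m : ℕ, ∀ hm : m < n, u ⟨m, hm⟩ = 0 := by
    intro m
    induction m using Nat.strong_induction_on with
    | _ m ih =>
      intro hm
      match m, hm with
      | 0, hm => exact h0
      | m + 1, hm =>
        have hm' : m < n := by omega
        have row := congrFun hu ⟨m, hm'⟩
        simp only [Matrix.mulVec, dotProduct, Pi.smul_apply, smul_eq_mul] at row
        have hsum : ∑ k : Fin n, T ⟨m, hm'⟩ k * u k
            = T ⟨m, hm'⟩ ⟨m + 1, hm⟩ * u ⟨m + 1, hm⟩ := by
          apply Finset.sum_eq_single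
          · intro k _ hk
            have hk' : (k : ℕ) ≠ m + 1 := fun hh => hk (Fin.ext hh)
            rcases Nat.lt_or_ge (m + 1) (k : ℕ) with hlt | hle
            · rw [hup _ _ hlt, zero_mul]
            · have : (k : ℕ) < m + 1 := by omega
              have : u k = 0 := by
                have := ih (k : ℕ) (by omega) k.isLt
                simpa using this
              rw [this, mul_zero]
          · intro hh
            exact absurd (Finset.mem_univ _) hh
        rw [hsum] at row
        have hui : u ⟨m, hm'⟩ = 0 := ih m (by omega) hm'
        rw [hui, mul_zero] at row
        have := hsup ⟨m, hm'⟩ ⟨m + 1, hm⟩ rfl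
        exact (mul_eq_zero.mp row).resolve_left this
  funext k
  have := key k.1 k.2
  simpa using this

lemma charpoly_conj {n : ℕ} (P A B : Matrix (Fin n) (Fin n) ℝ) (h1 : P * B = 1) :
    (P * A * B).charpoly = A.charpoly := by
  have hcm : charmatrix (P * A * B) =
      (C : ℝ →+* ℝ[X]).mapMatrix P * charmatrix A * (C : ℝ →+* ℝ[X]).mapMatrix B := by
    rw [charmatrix, charmatrix, mul_sub, sub_mul]
    congr 1
    · rw [mul_assoc, (Matrix.scalar_commute (X : ℝ[X]) (fun r => Commute.all _ _) _).eq,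
        ← mul_assoc, ← _root_.map_mul, h1]
      simp
    · rw [← _root_.map_mul, ← _root_.map_mul]
  rw [Matrix.charpoly, Matrix.charpoly, hcm, det_mul, det_mul]
  have : ((C : ℝ →+* ℝ[X]).mapMatrix P).det * ((C : ℝ →+* ℝ[X]).mapMatrix B).det = 1 := by
    rw [← det_mul, ← _root_.map_mul, h1]
    simp
  calc ((C : ℝ →+* ℝ[X]).mapMatrix P).det * (charmatrix A).det *
        ((C : ℝ →+* ℝ[X]).mapMatrix B).det
      = (charmatrix A).det * (((C : ℝ →+* ℝ[X]).mapMatrix P).det *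
        ((C : ℝ →+* ℝ[X]).mapMatrix B).det) := by ring
    _ = (charmatrix A).det := by rw [this, mul_one]

lemma charpoly_diagonal {n : ℕ} (d : Fin n → ℝ) :
    (Matrix.diagonal d).charpoly = ∏ i, (X - C (d i)) := by
  rw [Matrix.charpoly]
  have : charmatrix (Matrix.diagonal d) = Matrix.diagonal (fun i => X - C (d i)) := by
    ext i j
    by_cases h : i = j
    · subst h; simp
    · rw [charmatrix_apply_ne _ _ _ h, Matrix.diagonal_apply_ne _ h,
        Matrix.diagonal_apply_ne _ h]
      simp
  rw [this, Matrix.det_diagonal]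

section Sym

variable (n : ℕ) (x : ℝ)

noncomputable def Smat : Matrix (Fin n) (Fin n) ℝ :=
  fun i j => if n ≤ (i : ℕ) + (j : ℕ) + 1
    then Real.sqrt x ^ ((n - 1 - (i : ℕ)) + (n - 1 - (j : ℕ))) else 0

noncomputable def Pmat : Matrix (Fin n) (Fin n) ℝ :=
  Matrix.diagonal (fun i : Fin n => Real.sqrt x ^ (n - 1 - (i : ℕ)))

noncomputable def Pinv : Matrix (Fin n) (Fin n) ℝ :=
  Matrix.diagonal (fun i : Fin n => (Real.sqrt x ^ (n - 1 - (i : ℕ)))⁻¹)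

variable {n x}

lemma sqrtx_pos (hx0 : 0 < x) : 0 < Real.sqrt x := Real.sqrt_pos.mpr hx0

lemma Pmat_mul_Pinv (hx0 : 0 < x) : Pmat n x * Pinv n x = 1 := by
  rw [Pmat, Pinv, Matrix.diagonal_mul_diagonal,
    show (fun i : Fin n => Real.sqrt x ^ (n - 1 - (i : ℕ)) * (Real.sqrt x ^ (n - 1 - (i : ℕ)))⁻¹)
      = fun _ => (1:ℝ) from funext fun i =>
        mul_inv_cancel₀ (pow_ne_zero _ (ne_of_gt (sqrtx_pos hx0))), Matrix.diagonal_one]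

lemma Pinv_mul_Pmat (hx0 : 0 < x) : Pinv n x * Pmat n x = 1 := by
  rw [Pinv, Pmat, Matrix.diagonal_mul_diagonal,
    show (fun i : Fin n => (Real.sqrt x ^ (n - 1 - (i : ℕ)))⁻¹ * Real.sqrt x ^ (n - 1 - (i : ℕ)))
      = fun _ => (1:ℝ) from funext fun i =>
        inv_mul_cancel₀ (pow_ne_zero _ (ne_of_gt (sqrtx_pos hx0))), Matrix.diagonal_one]

lemma Smat_isHermitian : (Smat n x).IsHermitian := by
  ext i j
  rw [Matrix.conjTranspose_apply, Smat]
  simp only [star_trivial]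
  rw [show (j : ℕ) + (i : ℕ) + 1 = (i : ℕ) + (j : ℕ) + 1 from by ring,
    Nat.add_comm (n - 1 - (j : ℕ))]
  rfl

lemma Mmat_eq_conj (hx0 : 0 < x) : Mmat n x = Pinv n x * Smat n x * Pmat n x := by
  have hs := sqrtx_pos hx0
  have hsx : Real.sqrt x ^ 2 = x := Real.sq_sqrt hx0.le
  ext i j
  rw [Pinv, Pmat, Matrix.mul_diagonal, Matrix.diagonal_mul, Mmat, Smat]
  by_cases h : n ≤ (i : ℕ) + (j : ℕ) + 1
  · rw [if_pos h, if_pos h, pow_add, ← mul_assoc, inv_mul_cancel₀ (pow_ne_zero _ hs.ne'),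
      one_mul, ← pow_add,
      show (n - 1 - (j:ℕ)) + (n - 1 - (j:ℕ)) = 2 * (n - 1 - (j:ℕ)) from by ring, pow_mul, hsx]
  · rw [if_neg h, if_neg h, mul_zero, zero_mul]

end Sym

/-- `M_n(x)` has `n` distinct real eigenvalues, and the one of maximal absolute value
is positive: its characteristic polynomial splits into distinct real linear factors,
and the root of maximal absolute value is positive. -/
theorem Mmat_eigenvalues (n : ℕ) (hn : 1 < n) (x : ℝ) (hx0 : 0 < x) (hx1 : x ≤ 1) :
    ∃ d : Fin n → ℝ, Function.Injective d ∧
      (Mmat n x).charpoly = ∏ i, (Polynomial.X - Polynomial.C (d i)) ∧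
      ∃ i, 0 < d i ∧ ∀ j, |d j| ≤ d i := by
  classical
  have hn0 : 0 < n := by omega
  have hS : (Smat n x).IsHermitian := Smat_isHermitian
  set d : Fin n → ℝ := hS.eigenvalues with hd
  set U : Matrix (Fin n) (Fin n) ℝ :=
    (Matrix.IsHermitian.eigenvectorUnitary hS : Matrix (Fin n) (Fin n) ℝ) with hU
  have hUV : U * star U = 1 := Unitary.coe_mul_star_self _
  have hVU : star U * U = 1 := Unitary.coe_star_mul_self _
  set D : Matrix (Fin n) (Fin n) ℝ := Matrix.diagonal d with hD
  have hspec : Smat n x = U * D * star U := by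
    have h := hS.spectral_theorem
    rwa [RCLike.ofReal_real_eq_id, Function.id_comp] at h
  set Q : Matrix (Fin n) (Fin n) ℝ := Pinv n x * U with hQ
  set R : Matrix (Fin n) (Fin n) ℝ := star U * Pmat n x with hR
  have hQR : Q * R = 1 := by
    rw [hQ, hR, Matrix.mul_assoc, ← Matrix.mul_assoc U, hUV, Matrix.one_mul,
      Pinv_mul_Pmat hx0]
  have hRQ : R * Q = 1 := by
    rw [hQ, hR, Matrix.mul_assoc, ← Matrix.mul_assoc (Pmat n x), Pmat_mul_Pinv hx0,
      Matrix.one_mul, hVU]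
  have hM : Mmat n x = Q * D * R := by
    rw [Mmat_eq_conj hx0, hspec, hQ, hR]
    simp only [Matrix.mul_assoc]
  have hchar : (Mmat n x).charpoly = ∏ i, (Polynomial.X - Polynomial.C (d i)) := by
    rw [hM, charpoly_conj Q D R hQR, charpoly_diagonal]
  have hNM : Nmat n x * Mmat n x = 1 := Nmat_mul_Mmat n hn0 x hx0
  have hMN : Mmat n x * Nmat n x = 1 := mul_eq_one_comm.mp hNM
  -- all eigenvalues are nonzero
  have hdetQ : Q.det * R.det = 1 := by rw [← Matrix.det_mul, hQR, Matrix.det_one]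
  have hdetM : (Mmat n x).det = ∏ i, d i := by
    rw [hM, Matrix.det_mul, Matrix.det_mul, hD, Matrix.det_diagonal]
    calc Q.det * (∏ i, d i) * R.det = (∏ i, d i) * (Q.det * R.det) := by ring
      _ = ∏ i, d i := by rw [hdetQ, mul_one]
  have hdet : ∏ i, d i ≠ 0 := by
    intro h
    have h1 : (Mmat n x).det * (Nmat n x).det = 1 := by
      rw [← Matrix.det_mul, hMN, Matrix.det_one]
    rw [hdetM, h, zero_mul] at h1
    exact zero_ne_one h1
  have hd0 : ∀ i, d i ≠ 0 := fun i =>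
    Finset.prod_ne_zero_iff.mp hdet i (Finset.mem_univ i)
  -- columns of Q are eigenvectors
  have hMQ : Mmat n x * Q = Q * D := by
    rw [hM, Matrix.mul_assoc (Q * D) R Q, hRQ, Matrix.mul_one]
  set v : Fin n → Fin n → ℝ := fun i k => Q k i with hv
  have hMv : ∀ i, Mmat n x *ᵥ v i = d i • v i := by
    intro i; funext k
    have h1 : (Mmat n x * Q) k i = (Q * D) k i := by rw [hMQ]
    rw [Matrix.mul_apply, hD, Matrix.mul_diagonal] at h1
    simpa [Matrix.mulVec, dotProduct, hv, mul_comm] using h1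
  have hNv : ∀ i, Nmat n x *ᵥ v i = (d i)⁻¹ • v i := by
    intro i
    have h1 : Nmat n x *ᵥ (Mmat n x *ᵥ v i) = v i := by
      rw [Matrix.mulVec_mulVec, hNM, Matrix.one_mulVec]
    rw [hMv i, Matrix.mulVec_smul] at h1
    calc Nmat n x *ᵥ v i = (d i)⁻¹ • (d i • (Nmat n x *ᵥ v i)) := by
          rw [smul_smul, inv_mul_cancel₀ (hd0 i), one_smul]
      _ = (d i)⁻¹ • v i := by rw [h1]
  have hTv : ∀ i, (Nmat n x * Nmat n x) *ᵥ v i = ((d i)⁻¹ * (d i)⁻¹) • v i := by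
    intro i
    rw [← Matrix.mulVec_mulVec, hNv i, Matrix.mulVec_smul, hNv i, smul_smul]
  have hRv : ∀ i k, (R *ᵥ v i) k = (1 : Matrix (Fin n) (Fin n) ℝ) k i := by
    intro i k
    have h1 : (R * Q) k i = (1 : Matrix (Fin n) (Fin n) ℝ) k i := by rw [hRQ]
    rw [Matrix.mul_apply] at h1
    simpa [Matrix.mulVec, dotProduct, hv] using h1
  have hv0 : ∀ i : Fin n, v i ⟨0, hn0⟩ ≠ 0 := by
    intro i h0
    have hz := tri_ker hn0 (Nmat n x * Nmat n x) (NN_upper n x)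
      (fun a b hab => NN_super n x hx0 a b hab) _ _ (hTv i) h0
    have h1 := hRv i i
    rw [hz] at h1
    simpa using h1
  -- squares of eigenvalues are distinct
  have hsq : Function.Injective (fun i => (d i) ^ 2) := by
    intro i j hij
    simp only at hij
    by_contra hne
    have hlam : (d i)⁻¹ * (d i)⁻¹ = (d j)⁻¹ * (d j)⁻¹ := by
      rw [← mul_inv, ← mul_inv, ← sq, ← sq, hij]
    set a : ℝ := v i ⟨0, hn0⟩ with ha
    set b : ℝ := v j ⟨0, hn0⟩ with hb
    set u : Fin n → ℝ := b • v i - a • v j with hu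
    have hTu : (Nmat n x * Nmat n x) *ᵥ u = ((d i)⁻¹ * (d i)⁻¹) • u := by
      rw [hu, Matrix.mulVec_sub, Matrix.mulVec_smul, Matrix.mulVec_smul, hTv i, hTv j,
        ← hlam, smul_comm b, smul_comm a, smul_sub]
    have hu0 : u ⟨0, hn0⟩ = 0 := by
      simp only [hu, Pi.sub_apply, Pi.smul_apply, smul_eq_mul, ← ha, ← hb]
      ring
    have hz := tri_ker hn0 (Nmat n x * Nmat n x) (NN_upper n x)
      (fun p q hpq => NN_super n x hx0 p q hpq) _ _ hTu hu0
    have hbva : b • v i = a • v j := by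
      have := sub_eq_zero.mp hz
      exact this
    have h1 : (R *ᵥ (b • v i)) i = (R *ᵥ (a • v j)) i := by rw [hbva]
    rw [Matrix.mulVec_smul, Matrix.mulVec_smul, Pi.smul_apply, Pi.smul_apply,
      hRv i i, hRv j i, Matrix.one_apply_eq, Matrix.one_apply_ne (by
        intro hh; exact hne (by rw [hh]))] at h1
    simp only [smul_eq_mul, mul_one, mul_zero] at h1
    exact hv0 j (by rw [← hb, h1])
  have hdinj : Function.Injective d := by
    intro i j hij
    exact hsq (by simp only [hij])
  -- nonnegativity of powers
  have hMnonneg : ∀ i j, 0 ≤ Mmat n x i j := by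
    intro i j
    rw [Mmat]
    split_ifs
    · positivity
    · exact le_refl 0
  have hpowpos : ∀ m : ℕ, ∀ i j, 0 ≤ (Mmat n x ^ m) i j := by
    intro m
    induction m with
    | zero =>
      intro i j
      rw [pow_zero, Matrix.one_apply]
      split_ifs
      · exact zero_le_one
      · exact le_refl 0
    | succ m ih =>
      intro i j
      rw [pow_succ, Matrix.mul_apply]
      exact Finset.sum_nonneg fun k _ => mul_nonneg (ih i k) (hMnonneg k j)
  have hMm : ∀ m : ℕ, Mmat n x ^ m = Q * D ^ m * R := by
    intro m
    induction m with
    | zero => rw [pow_zero, pow_zero, Matrix.mul_one, hQR]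
    | succ m ih =>
      rw [pow_succ, ih, hM, pow_succ]
      calc Q * D ^ m * R * (Q * D * R) = Q * D ^ m * (R * Q * (D * R)) := by
            simp only [Matrix.mul_assoc]
        _ = Q * (D ^ m * D) * R := by
            rw [hRQ, Matrix.one_mul]
            simp only [Matrix.mul_assoc]
  have htr : ∀ m : ℕ, Matrix.trace (Mmat n x ^ m) = ∑ i, d i ^ m := by
    intro m
    rw [hMm m, Matrix.trace_mul_comm, ← Matrix.mul_assoc, hRQ, Matrix.one_mul, hD,
      Matrix.diagonal_pow, Matrix.trace_diagonal]
    simp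
  have htr_nonneg : ∀ m : ℕ, 0 ≤ ∑ i, d i ^ m := by
    intro m
    rw [← htr m, Matrix.trace]
    exact Finset.sum_nonneg fun i _ => hpowpos m i i
  -- the maximal |eigenvalue|
  obtain ⟨i₀, -, hmax⟩ := Finset.exists_max_image Finset.univ (fun i => |d i|)
    ⟨⟨0, hn0⟩, Finset.mem_univ _⟩
  have hmax' : ∀ j, |d j| ≤ |d i₀| := fun j => hmax j (Finset.mem_univ j)
  have hipos : 0 < d i₀ := by
    rcases (hd0 i₀).lt_or_gt with hneg | hpos
    · exfalso
      set μ : ℝ := -d i₀ with hμdef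
      have hμ : 0 < μ := by simp only [hμdef]; linarith
      have habs : |d i₀| = μ := abs_of_neg hneg
      have hstrict : ∀ j, j ≠ i₀ → |d j| < μ := by
        intro j hj
        rcases lt_or_eq_of_le (hmax' j) with h | h
        · rw [habs] at h; exact h
        · exfalso
          apply hj
          apply hsq
          simp only
          rw [← sq_abs (d j), ← sq_abs (d i₀), h]
      have hne : (Finset.univ.erase i₀).Nonempty := by
        rw [← Finset.card_pos, Finset.card_erase_of_mem (Finset.mem_univ _),
          Finset.card_univ, Fintype.card_fin]
        omega
      obtain ⟨j₀, hj₀mem, hρ⟩ := Finset.exists_max_image (Finset.univ.erase i₀)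
        (fun j => |d j|) hne
      set ρ : ℝ := |d j₀| with hρdef
      have hρμ : ρ < μ := hstrict j₀ (Finset.ne_of_mem_erase hj₀mem)
      have hρ0 : 0 ≤ ρ := abs_nonneg _
      obtain ⟨k, hk⟩ := exists_pow_lt_of_lt_one
        (show (0:ℝ) < 1 / (n:ℝ) from by positivity)
        (show ρ / μ < 1 from (div_lt_one hμ).mpr hρμ)
      set m : ℕ := 2 * k + 1 with hm
      have hodd : Odd m := ⟨k, by omega⟩
      have hmon : (ρ / μ) ^ m ≤ (ρ / μ) ^ k :=
        pow_le_pow_of_le_one (by positivity) ((div_le_one hμ).mpr hρμ.le) (by omega)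
      have hkey : (n : ℝ) * ρ ^ m < μ ^ m := by
        have h1 : (ρ / μ) ^ m < 1 / (n:ℝ) := lt_of_le_of_lt hmon hk
        rw [div_pow, div_lt_div_iff₀ (by positivity) (by positivity)] at h1
        linarith [h1]
      have h2 : ∑ j ∈ Finset.univ.erase i₀, d j ^ m ≤ (n : ℝ) * ρ ^ m := by
        have hcard : ((Finset.univ.erase i₀).card : ℝ) ≤ (n : ℝ) := by
          rw [Finset.card_erase_of_mem (Finset.mem_univ _), Finset.card_univ,
            Fintype.card_fin]
          exact_mod_cast Nat.sub_le n 1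
        calc ∑ j ∈ Finset.univ.erase i₀, d j ^ m
            ≤ ∑ j ∈ Finset.univ.erase i₀, ρ ^ m := by
              apply Finset.sum_le_sum
              intro j hj
              calc d j ^ m ≤ |d j ^ m| := le_abs_self _
                _ = |d j| ^ m := abs_pow _ _
                _ ≤ ρ ^ m := pow_le_pow_left₀ (abs_nonneg _) (hρ j hj) m
          _ = ((Finset.univ.erase i₀).card : ℝ) * ρ ^ m := by
              rw [Finset.sum_const, nsmul_eq_mul]
          _ ≤ (n : ℝ) * ρ ^ m := by
              apply mul_le_mul_of_nonneg_right hcard (by positivity)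
      have h3 : d i₀ ^ m = -(μ ^ m) := by
        rw [show d i₀ = -μ from by simp [hμdef], Odd.neg_pow hodd]
      have hsplit : ∑ i, d i ^ m = d i₀ ^ m + ∑ j ∈ Finset.univ.erase i₀, d j ^ m :=
        (Finset.add_sum_erase _ _ (Finset.mem_univ i₀)).symm
      have := htr_nonneg m
      rw [hsplit, h3] at this
      linarith
    · exact hpos
  exact ⟨d, hdinj, hchar, i₀, hipos, fun j => (hmax' j).trans_eq (abs_of_pos hipos)⟩
end

section
/- For n = 2, the matrix M_2(x) = [[0,1],[x,1]] has largest eigenvalue d_2(x) = (1+√(1+4x))/2, and ∫₀¹ log d_2(x) d(log x) = ∫₀¹ log((1+√(1+4x))/2)/x dx = π²/15. -/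
/-!
Write `d = d₂(x)`, a root of `X² - X - x`, and `Li₂ x = ∫₀ˣ -log (1 - t) / t dt`. Since
`d (d - 1) = x` and `d' = 1 / (2d - 1)`, the function `log² d / 2 - Li₂ (1 - d)` is an
antiderivative of `log d / x`, so the integral equals `log² φ / 2 - Li₂ ψ` with `ψ = 1 - φ = -φ⁻¹`.
For `g = φ⁻¹` one has `1 - g² = g`, so the duplication formula at `g`, Landen's identity at `g²`
and Euler's reflection formula at `g²` are three linear equations in `Li₂ g`, `Li₂ (-g)`, `Li₂ g²`,
giving `Li₂ ψ = log² φ / 2 - π² / 15`. The `π² / 6` in Euler's formula is `Li₂ 1 = ∑ 1 / n²`.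
Each functional equation is proved by differentiating and comparing at `0`.
-/

open Real MeasureTheory Set intervalIntegral Topology
open scoped goldenRatio Interval

lemma div_eq_dslope_zero {f : ℝ → ℝ} (hf0 : f 0 = 0) {x : ℝ} (hx : x ≠ 0) :
    f x / x = dslope f 0 x := by
  rw [dslope_of_ne _ hx, slope_def_field, hf0, sub_zero, sub_zero]

lemma intervalIntegrable_div_id {f : ℝ → ℝ} {s : Set ℝ} {a b : ℝ} (hs : s ∈ 𝓝 0)
    (hf : ContinuousOn f s) (hf' : DifferentiableAt ℝ f 0) (hf0 : f 0 = 0) (hab : [[a, b]] ⊆ s) :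
    IntervalIntegrable (fun x => f x / x) volume a b := by
  refine (((continuousOn_dslope hs).2 ⟨hf, hf'⟩).mono hab).intervalIntegrable.congr_ae ?_
  filter_upwards [ae_restrict_of_ae (compl_mem_ae_iff.2 (measure_singleton (0 : ℝ)))] with x hx
  exact (div_eq_dslope_zero hf0 hx).symm

lemma eq_of_hasDerivAt_eq_zero {h : ℝ → ℝ} {a b : ℝ} (hab : a ≤ b)
    (hcont : ContinuousOn h (Icc a b)) (hderiv : ∀ x ∈ Ioo a b, HasDerivAt h 0 x) : h b = h a := by
  rcases hab.eq_or_lt with rfl | hab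
  · rfl
  obtain ⟨c, -, hc⟩ := exists_hasDerivAt_eq_slope h (fun _ => 0) hab hcont hderiv
  rw [eq_comm, div_eq_zero_iff, sub_eq_zero] at hc
  exact hc.resolve_right (sub_ne_zero.2 hab.ne')

lemma continuousOn_log_one_sub : ContinuousOn (fun t => log (1 - t)) (Iio 1) :=
  ContinuousOn.log (by fun_prop) fun t ht => by linarith [mem_Iio.1 ht]

lemma measurable_dilog_integrand : Measurable fun t : ℝ => -log (1 - t) / t := by fun_prop

-- The real dilogarithm `Li₂`; the integral is junk for `x > 1`.
noncomputable def dilog (x : ℝ) : ℝ := ∫ t in (0 : ℝ)..x, -log (1 - t) / t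

lemma intervalIntegrable_dilog_integrand_of_lt_one {a b : ℝ} (ha : a < 1) (hb : b < 1) :
    IntervalIntegrable (fun t => -log (1 - t) / t) volume a b := by
  refine intervalIntegrable_div_id (s := Iio 1) (Iio_mem_nhds one_pos) ?_ ?_ (by simp) ?_
  · exact continuousOn_log_one_sub.neg
  · exact ((differentiableAt_id.const_sub 1).log (by norm_num)).neg
  · exact fun t ht => ht.2.trans_lt (max_lt ha hb)

lemma hasDerivAt_dilog {x : ℝ} (hx0 : x ≠ 0) (hx1 : x < 1) :
    HasDerivAt dilog (-log (1 - x) / x) x := by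
  refine integral_hasDerivAt_right (intervalIntegrable_dilog_integrand_of_lt_one one_pos hx1)
    measurable_dilog_integrand.stronglyMeasurable.stronglyMeasurableAtFilter ?_
  exact ((continuousAt_log (by linarith)).comp (by fun_prop)).neg.div continuousAt_id hx0

lemma HasDerivAt.dilog {f : ℝ → ℝ} {f' x : ℝ} (hf : HasDerivAt f f' x) (hx0 : f x ≠ 0)
    (hx1 : f x < 1) : HasDerivAt (fun y => dilog (f y)) (-Real.log (1 - f x) / f x * f') x :=
  (hasDerivAt_dilog hx0 hx1).comp x hf

lemma hasSum_pow_div_succ {t : ℝ} (ht : |t| < 1) (ht0 : t ≠ 0) :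
    HasSum (fun n : ℕ => t ^ n / (n + 1)) (-log (1 - t) / t) := by
  have h := (hasSum_pow_div_log_of_abs_lt_one ht).div_const t
  rwa [show (fun n : ℕ => t ^ (n + 1) / (n + 1) / t) = fun n : ℕ => t ^ n / (n + 1) by
    funext n; field_simp; ring] at h

lemma hasSum_one_div_succ_sq : HasSum (fun n : ℕ => 1 / ((n : ℝ) + 1) ^ 2) (π ^ 2 / 6) := by
  simpa using (hasSum_nat_add_iff' 1).2 hasSum_zeta_two

lemma lintegral_pow_div_succ (n : ℕ) :
    ∫⁻ t in Ioo 0 1, ENNReal.ofReal (t ^ n / (n + 1)) = ENNReal.ofReal (1 / ((n : ℝ) + 1) ^ 2) := by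
  rw [← ofReal_integral_eq_lintegral_ofReal
    (((continuous_pow n).div_const _).integrableOn_Icc.mono_set Ioo_subset_Icc_self)]
  · rw [← integral_Ioc_eq_integral_Ioo, ← intervalIntegral.integral_of_le zero_le_one,
      intervalIntegral.integral_div, integral_pow]
    congr 1
    field_simp
    simp
  · filter_upwards [ae_restrict_mem measurableSet_Ioo] with t ht
    exact div_nonneg (pow_nonneg ht.1.le n) (by positivity)

lemma lintegral_dilog_integrand :
    ∫⁻ t in Ioo 0 1, ENNReal.ofReal (-log (1 - t) / t) = ENNReal.ofReal (π ^ 2 / 6) := by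
  calc ∫⁻ t in Ioo 0 1, ENNReal.ofReal (-log (1 - t) / t)
      = ∫⁻ t in Ioo 0 1, ∑' n : ℕ, ENNReal.ofReal (t ^ n / (n + 1)) := by
        refine setLIntegral_congr_fun measurableSet_Ioo fun t ht => ?_
        have hsum := hasSum_pow_div_succ (abs_lt.2 ⟨by linarith [ht.1], ht.2⟩) ht.1.ne'
        rw [← ENNReal.ofReal_tsum_of_nonneg
          (fun n => div_nonneg (pow_nonneg ht.1.le n) (by positivity)) hsum.summable, hsum.tsum_eq]
    _ = ∑' n : ℕ, ∫⁻ t in Ioo 0 1, ENNReal.ofReal (t ^ n / (n + 1)) :=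
        lintegral_tsum fun n => (by fun_prop : Measurable fun t : ℝ => t ^ n / (n + 1))
          |>.ennreal_ofReal.aemeasurable
    _ = ENNReal.ofReal (π ^ 2 / 6) := by
        simp_rw [lintegral_pow_div_succ]
        rw [← ENNReal.ofReal_tsum_of_nonneg (fun n => by positivity)
          hasSum_one_div_succ_sq.summable, hasSum_one_div_succ_sq.tsum_eq]

lemma dilog_integrand_nonneg {t : ℝ} (ht : t ∈ Ioo (0 : ℝ) 1) : 0 ≤ -log (1 - t) / t :=
  div_nonneg (neg_nonneg.2 (log_nonpos (by linarith [ht.2]) (by linarith [ht.1]))) ht.1.le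

lemma integrableOn_dilog_integrand : IntegrableOn (fun t => -log (1 - t) / t) (Ioo 0 1) := by
  refine (lintegral_ofReal_ne_top_iff_integrable
    measurable_dilog_integrand.aestronglyMeasurable ?_).1 ?_
  · exact (ae_restrict_mem measurableSet_Ioo).mono fun t ht => dilog_integrand_nonneg ht
  · rw [lintegral_dilog_integrand]
    exact ENNReal.ofReal_ne_top

lemma dilog_one : dilog 1 = π ^ 2 / 6 := by
  rw [dilog, intervalIntegral.integral_of_le zero_le_one, integral_Ioc_eq_integral_Ioo,
    integral_eq_lintegral_of_nonneg_ae, lintegral_dilog_integrand,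
    ENNReal.toReal_ofReal (by positivity)]
  · exact (ae_restrict_mem measurableSet_Ioo).mono fun t ht => dilog_integrand_nonneg ht
  · exact integrableOn_dilog_integrand.aestronglyMeasurable

lemma intervalIntegrable_dilog_integrand_of_le_one {a b : ℝ} (ha : a ≤ 1) (hb : b ≤ 1) :
    IntervalIntegrable (fun t => -log (1 - t) / t) volume a b := by
  have h01 : IntervalIntegrable (fun t => -log (1 - t) / t) volume 0 1 :=
    (intervalIntegrable_iff_integrableOn_Ioo_of_le zero_le_one).2 integrableOn_dilog_integrand
  have hc : min (min a b) 0 < 1 := (min_le_right _ _).trans_lt one_pos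
  refine (intervalIntegrable_dilog_integrand_of_lt_one hc one_pos |>.trans h01).mono_set ?_
  rw [uIcc_of_le hc.le]
  exact uIcc_subset_Icc ⟨(min_le_left _ _).trans (min_le_left _ _), ha⟩
    ⟨(min_le_left _ _).trans (min_le_right _ _), hb⟩

lemma continuousOn_dilog : ContinuousOn dilog (Iic 1) := by
  intro x hx
  have hx1 : x ≤ 1 := hx
  have hsub : [[x - 1, 1]] = Icc (x - 1) 1 := uIcc_of_le (by linarith)
  have h := continuousOn_primitive_interval'
    (intervalIntegrable_dilog_integrand_of_le_one (a := x - 1) (by linarith) le_rfl) (a := 0)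
    (by rw [hsub]; exact ⟨by linarith, zero_le_one⟩)
  rw [hsub] at h
  refine (h x ⟨by linarith, hx1⟩).mono_of_mem_nhdsWithin ?_
  rw [← Ici_inter_Iic, inter_comm]
  exact inter_mem_nhdsWithin _ (Ici_mem_nhds (by linarith))

lemma dilog_zero : dilog 0 = 0 := integral_same

lemma ContinuousOn.dilog {f : ℝ → ℝ} {s : Set ℝ} (hf : ContinuousOn f s) (h1 : ∀ x ∈ s, f x ≤ 1) :
    ContinuousOn (fun x => dilog (f x)) s :=
  continuousOn_dilog.comp hf h1

lemma dilog_add_dilog_neg {x : ℝ} (hx0 : 0 ≤ x) (hx1 : x < 1) :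
    dilog x + dilog (-x) = dilog (x ^ 2) / 2 := by
  suffices h : dilog x + dilog (-x) - dilog (x ^ 2) / 2 =
      dilog 0 + dilog (-0) - dilog (0 ^ 2) / 2 by
    simp only [neg_zero, zero_pow two_ne_zero, dilog_zero] at h
    linarith
  refine eq_of_hasDerivAt_eq_zero (h := fun y => dilog y + dilog (-y) - dilog (y ^ 2) / 2) hx0
    ?_ fun y ⟨hy0, hy1⟩ => ?_
  · refine (((continuousOn_id' _).dilog ?_).add (continuous_neg.continuousOn.dilog ?_)).sub
      (((continuousOn_pow 2).dilog ?_).div_const 2) <;>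
    · intro y ⟨hy0, hy1⟩
      nlinarith
  · have hd := (((hasDerivAt_id' y).dilog hy0.ne' (hy1.trans hx1)).add
      ((hasDerivAt_neg' y).dilog (neg_ne_zero.2 hy0.ne') (by linarith))).sub
      (((hasDerivAt_pow 2 y).dilog (by positivity) (by nlinarith)).div_const 2)
    refine hd.congr_deriv ?_
    rw [sub_neg_eq_add, show 1 - y ^ 2 = (1 - y) * (1 + y) by ring,
      log_mul (by linarith) (by linarith)]
    field_simp
    ring

lemma dilog_add_dilog_neg_div_one_sub {x : ℝ} (hx0 : 0 ≤ x) (hx1 : x < 1) :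
    dilog x + dilog (-x / (1 - x)) = -log (1 - x) ^ 2 / 2 := by
  suffices h : dilog x + dilog (-x / (1 - x)) + log (1 - x) ^ 2 / 2 =
      dilog 0 + dilog (-0 / (1 - 0)) + log (1 - 0) ^ 2 / 2 by
    simp only [neg_zero, sub_zero, div_one, dilog_zero, log_one] at h
    linarith
  refine eq_of_hasDerivAt_eq_zero
    (h := fun y => dilog y + dilog (-y / (1 - y)) + log (1 - y) ^ 2 / 2) hx0 ?_
    fun y ⟨hy0, hy1⟩ => ?_
  · have hsub : Icc 0 x ⊆ Iio 1 := fun y hy => hy.2.trans_lt hx1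
    have hw : ContinuousOn (fun y : ℝ => -y / (1 - y)) (Icc 0 x) :=
      continuous_neg.continuousOn.div (by fun_prop) fun y hy => by linarith [hy.2]
    refine (((continuousOn_id' _).dilog fun y hy => (hsub hy).le).add
      (hw.dilog fun y hy => ?_)).add ((continuousOn_log_one_sub.mono hsub).pow 2 |>.div_const 2)
    have : -y / (1 - y) ≤ 0 :=
      div_nonpos_of_nonpos_of_nonneg (by linarith [hy.1]) (by linarith [hy.2])
    linarith
  · have h1y : 0 < 1 - y := by linarith
    have hw : HasDerivAt (fun y : ℝ => -y / (1 - y)) (-1 / (1 - y) ^ 2) y :=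
      ((hasDerivAt_neg' y).div ((hasDerivAt_id' y).const_sub 1) h1y.ne').congr_deriv
        (by field_simp; ring)
    have hwneg : -y / (1 - y) < 0 := div_neg_of_neg_of_pos (by linarith) h1y
    have hd := (((hasDerivAt_id' y).dilog hy0.ne' (hy1.trans hx1)).add
      (hw.dilog hwneg.ne (by linarith))).add
      ((((hasDerivAt_id' y).const_sub 1).log h1y.ne').pow 2 |>.div_const 2)
    refine hd.congr_deriv ?_
    have hinv : 1 - -y / (1 - y) = (1 - y)⁻¹ := by field_simp; ring
    rw [hinv, log_inv]
    field_simp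
    ring

lemma continuousOn_log_mul_log_one_sub : ContinuousOn (fun x => log x * log (1 - x)) (Iio 1) := by
  have hslope : ContinuousOn (dslope (fun t => log (1 - t)) 0) (Iio 1) :=
    (continuousOn_dslope (Iio_mem_nhds one_pos)).2
      ⟨continuousOn_log_one_sub, (differentiableAt_id.const_sub 1).log (by norm_num)⟩
  refine (continuous_mul_log.continuousOn.mul hslope).congr fun x _ => ?_
  rcases eq_or_ne x 0 with rfl | hx
  · simp
  · rw [Pi.mul_apply, ← div_eq_dslope_zero (by simp) hx]
    field_simp

lemma dilog_add_dilog_one_sub {x : ℝ} (hx0 : 0 ≤ x) (hx1 : x ≤ 1) :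
    dilog x + dilog (1 - x) = π ^ 2 / 6 - log x * log (1 - x) := by
  rcases hx1.eq_or_lt with rfl | hx1
  · simp [dilog_one, dilog_zero]
  suffices h : dilog x + dilog (1 - x) + log x * log (1 - x) =
      dilog 0 + dilog (1 - 0) + log 0 * log (1 - 0) by
    simp only [sub_zero, dilog_zero, dilog_one, log_zero, zero_mul, add_zero, zero_add] at h
    linarith
  refine eq_of_hasDerivAt_eq_zero
    (h := fun y => dilog y + dilog (1 - y) + log y * log (1 - y)) hx0 ?_ fun y ⟨hy0, hy1⟩ => ?_
  · have hsub : Icc 0 x ⊆ Iio 1 := fun y hy => hy.2.trans_lt hx1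
    exact (((continuousOn_id' _).dilog fun y hy => (hsub hy).le).add
      ((continuousOn_const.sub (continuousOn_id' _)).dilog fun y hy =>
        show 1 - y ≤ 1 by linarith [hy.1])).add
      (continuousOn_log_mul_log_one_sub.mono hsub)
  · have h1y : 0 < 1 - y := by linarith
    have hsub := (hasDerivAt_id' y).const_sub 1
    have hd := (((hasDerivAt_id' y).dilog hy0.ne' (hy1.trans hx1)).add
      (hsub.dilog h1y.ne' (by linarith))).add ((hasDerivAt_log hy0.ne').mul (hsub.log h1y.ne'))
    refine hd.congr_deriv ?_
    rw [sub_sub_cancel]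
    field_simp
    ring

lemma dilog_goldenConj : dilog ψ = log φ ^ 2 / 2 - π ^ 2 / 15 := by
  set g := -ψ with hg
  have hg0 : 0 < g := neg_pos.2 goldenConj_neg
  have hg1 : g < 1 := by linarith [neg_one_lt_goldenConj]
  have hgsq : 1 - g ^ 2 = g := by linear_combination -goldenConj_sq
  have hlog : log g = -log φ := by rw [hg, ← inv_goldenRatio, log_inv]
  have e1 := dilog_add_dilog_neg hg0.le hg1
  have e2 := dilog_add_dilog_neg_div_one_sub (sq_nonneg g) (by nlinarith)
  have e3 := dilog_add_dilog_one_sub (sq_nonneg g) (by nlinarith)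
  rw [hgsq, show -g ^ 2 / g = -g by field_simp, hlog] at e2
  rw [hgsq, log_pow, Nat.cast_ofNat, hlog] at e3
  rw [show ψ = -g from (neg_neg ψ).symm]
  linear_combination (2 / 5) * e1 + (3 / 5) * e2 - (2 / 5) * e3

-- The dominant eigenvalue `d₂(x)` of `!![0, 1; x, 1]`.
noncomputable def perronRoot (x : ℝ) : ℝ := (1 + √(1 + 4 * x)) / 2

lemma half_le_perronRoot (x : ℝ) : 1 / 2 ≤ perronRoot x := by
  unfold perronRoot
  linarith [sqrt_nonneg (1 + 4 * x)]

lemma perronRoot_sq_sub_self {x : ℝ} (hx : -(1 / 4) ≤ x) : perronRoot x ^ 2 - perronRoot x = x := by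
  unfold perronRoot
  linear_combination (1 / 4) * sq_sqrt (by linarith : 0 ≤ 1 + 4 * x)

lemma one_lt_perronRoot {x : ℝ} (hx : 0 < x) : 1 < perronRoot x := by
  nlinarith [perronRoot_sq_sub_self (by linarith : -(1 / 4) ≤ x), half_le_perronRoot x]

lemma perronRoot_zero : perronRoot 0 = 1 := by norm_num [perronRoot]

lemma perronRoot_one : perronRoot 1 = φ := by norm_num [perronRoot]

lemma continuous_perronRoot : Continuous perronRoot := by
  unfold perronRoot
  fun_prop

lemma hasDerivAt_perronRoot {x : ℝ} (hx : -(1 / 4) < x) :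
    HasDerivAt perronRoot (1 / (2 * perronRoot x - 1)) x := by
  have h := ((((hasDerivAt_id' x).const_mul 4).const_add 1).sqrt (by linarith)).const_add 1
    |>.div_const 2
  refine h.congr_deriv ?_
  unfold perronRoot
  field_simp
  ring

lemma hasDerivAt_log_perronRoot_sq_sub_dilog {x : ℝ} (hx : 0 < x) :
    HasDerivAt (fun y => log (perronRoot y) ^ 2 / 2 - dilog (1 - perronRoot y))
      (log (perronRoot x) / x) x := by
  have hd := hasDerivAt_perronRoot (by linarith : -(1 / 4) < x)
  have hd1 := one_lt_perronRoot hx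
  have h := (((hd.log (by linarith)).pow 2).div_const 2).sub
    ((hd.const_sub 1).dilog (by linarith) (by linarith))
  refine h.congr_deriv ?_
  have hx' := perronRoot_sq_sub_self (by linarith : -(1 / 4) ≤ x)
  set d := perronRoot x
  rw [← hx', sub_sub_cancel]
  have : 2 * d - 1 ≠ 0 := by linarith
  have : 1 - d ≠ 0 := by linarith
  have : d - 1 ≠ 0 := by linarith
  field_simp
  ring

lemma continuous_log_perronRoot : Continuous fun x => log (perronRoot x) :=
  continuous_perronRoot.log fun x => by linarith [half_le_perronRoot x]

lemma intervalIntegrable_log_perronRoot_div (a b : ℝ) :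
    IntervalIntegrable (fun x => log (perronRoot x) / x) volume a b := by
  refine intervalIntegrable_div_id Filter.univ_mem continuous_log_perronRoot.continuousOn ?_
    (by simp [perronRoot_zero]) (subset_univ _)
  exact ((hasDerivAt_perronRoot (by norm_num)).log (by simp [perronRoot_zero])).differentiableAt

lemma integral_log_perronRoot_div : ∫ x in (0 : ℝ)..1, log (perronRoot x) / x = π ^ 2 / 15 := by
  have hcont : ContinuousOn (fun y => log (perronRoot y) ^ 2 / 2 - dilog (1 - perronRoot y))
      (Icc 0 1) :=
    ((continuous_log_perronRoot.pow 2).div_const 2).continuousOn.sub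
      ((continuous_const.sub continuous_perronRoot).continuousOn.dilog fun x _ =>
        show 1 - perronRoot x ≤ 1 by linarith [half_le_perronRoot x])
  rw [integral_eq_sub_of_hasDeriv_right_of_le zero_le_one hcont
    (fun x hx => (hasDerivAt_log_perronRoot_sq_sub_dilog hx.1).hasDerivWithinAt)
    (intervalIntegrable_log_perronRoot_div 0 1)]
  simp only [perronRoot_zero, perronRoot_one, one_sub_goldenConj, sub_self, log_one, dilog_zero,
    dilog_goldenConj]
  ring

lemma isRoot_charpoly_companion_iff {x μ : ℝ} :
    (!![0, 1; x, 1] : Matrix (Fin 2) (Fin 2) ℝ).charpoly.IsRoot μ ↔ μ ^ 2 - μ - x = 0 := by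
  rw [Matrix.charpoly_fin_two, Matrix.trace_fin_two, Matrix.det_fin_two]
  simp [sub_eq_add_neg]

lemma isRoot_charpoly_perronRoot {x : ℝ} (hx : -(1 / 4) ≤ x) :
    (!![0, 1; x, 1] : Matrix (Fin 2) (Fin 2) ℝ).charpoly.IsRoot (perronRoot x) :=
  isRoot_charpoly_companion_iff.2 (by linarith [perronRoot_sq_sub_self hx])

lemma abs_le_perronRoot_of_isRoot_charpoly {x μ : ℝ} (hx : -(1 / 4) ≤ x)
    (hμ : (!![0, 1; x, 1] : Matrix (Fin 2) (Fin 2) ℝ).charpoly.IsRoot μ) : |μ| ≤ perronRoot x := by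
  have hroots : (μ - perronRoot x) * (μ - (1 - perronRoot x)) = 0 := by
    linear_combination isRoot_charpoly_companion_iff.1 hμ - perronRoot_sq_sub_self hx
  have := half_le_perronRoot x
  rcases mul_eq_zero.1 hroots with h | h <;> rw [abs_le] <;> constructor <;> linarith

theorem n_two_integral :
    (∀ x : ℝ, 0 < x → x ≤ 1 →
      (Matrix.charpoly (!![0, 1; x, 1]) ).IsRoot ((1 + Real.sqrt (1 + 4 * x)) / 2) ∧
        ∀ μ : ℝ, (Matrix.charpoly (!![0, 1; x, 1])).IsRoot μ →
          |μ| ≤ (1 + Real.sqrt (1 + 4 * x)) / 2) ∧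
      ∫ x in (0:ℝ)..1, Real.log ((1 + Real.sqrt (1 + 4 * x)) / 2) / x = π ^ 2 / 15 :=
  ⟨fun x hx _ => ⟨isRoot_charpoly_perronRoot (by linarith),
    fun _ hμ => abs_le_perronRoot_of_isRoot_charpoly (by linarith) hμ⟩,
    integral_log_perronRoot_div⟩
end
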